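/- Let X be a Banach *-algebra and J a closed *-ideal of X such that X and J both have the Wiener property. If X has spectral synthesis, then J and X/J both have spectral synthesis. -/

import Mathlib

/-!
Common definitions for formalizing "Spectral synthesis for the operator space
projective tensor product of C*-algebras" (Jain–Kumar).
-/

noncomputable section

open scoped TensorProduct
open Topology Filter

/-- The operator norm of a (rectangular) complex scalar matrix, viewed as an operator
between the corresponding Euclidean (ℓ²) spaces. -/
noncomputable def matOpNormC {m n : Type} [Fintype m] [Fintype n] (γ : Matrix m n ℂ) : ℝ :=
  sSup {r | ∃ x : n → ℂ, (∑ j, ‖x j‖ ^ 2) ≤ 1 ∧ r = Real.sqrt (∑ i, ‖∑ j, γ i j * x j‖ ^ 2)}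

/-- An (abstract) operator space structure on a complex normed space `V`:
a family of matrix norms on the square matrix levels `Mₙ(V)` satisfying Ruan's axioms
and extending the norm of `V` at the first level. -/
structure OperatorSpaceStructure (V : Type) [NormedAddCommGroup V] [NormedSpace ℂ V] where
  matNorm : ∀ {p : ℕ}, Matrix (Fin p) (Fin p) V → ℝ
  matNorm_one : ∀ v : Matrix (Fin 1) (Fin 1) V, matNorm v = ‖v 0 0‖
  matNorm_add_le : ∀ {p : ℕ} (v w : Matrix (Fin p) (Fin p) V),
    matNorm (v + w) ≤ matNorm v + matNorm w
  matNorm_smul : ∀ {p : ℕ} (c : ℂ) (v : Matrix (Fin p) (Fin p) V),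
    matNorm (c • v) = ‖c‖ * matNorm v
  matNorm_eq_zero_iff : ∀ {p : ℕ} (v : Matrix (Fin p) (Fin p) V), matNorm v = 0 ↔ v = 0
  /-- Ruan's axiom: `‖γ v δ‖ ≤ ‖γ‖ ‖v‖ ‖δ‖` for scalar matrices `γ, δ`. -/
  matNorm_comp_le : ∀ {p q : ℕ} (γ : Matrix (Fin q) (Fin p) ℂ) (v : Matrix (Fin p) (Fin p) V)
    (δ : Matrix (Fin p) (Fin q) ℂ),
    matNorm (Matrix.of fun i j => ∑ k, ∑ l, (γ i k * δ l j) • v k l) ≤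
      matOpNormC γ * matNorm v * matOpNormC δ
  /-- Ruan's axiom: the norm of a direct sum is the maximum of the norms. -/
  matNorm_dirSum : ∀ {p q : ℕ} (v : Matrix (Fin p) (Fin p) V) (w : Matrix (Fin q) (Fin q) V),
    matNorm (Matrix.reindex finSumFinEquiv finSumFinEquiv (Matrix.fromBlocks v 0 0 w)) =
      max (matNorm v) (matNorm w)

/-- The operator space projective tensor norm `‖u‖_∧` of `u ∈ V ⊗ W`, with respect to
given operator space structures on `V` and `W`:
`‖u‖_∧ = inf {‖α‖‖v‖‖w‖‖β‖ : u = α (v ⊗ w) β}`, where `α ∈ M_{1,pq}(ℂ)`,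
`v ∈ M_p(V)`, `w ∈ M_q(W)`, `β ∈ M_{pq,1}(ℂ)`. -/
noncomputable def osProjNorm {V W : Type} [NormedAddCommGroup V] [NormedSpace ℂ V]
    [NormedAddCommGroup W] [NormedSpace ℂ W]
    (osV : OperatorSpaceStructure V) (osW : OperatorSpaceStructure W) (u : V ⊗[ℂ] W) : ℝ :=
  sInf {r | ∃ (p q : ℕ) (α : Matrix (Fin 1) (Fin p × Fin q) ℂ) (v : Matrix (Fin p) (Fin p) V)
    (w : Matrix (Fin q) (Fin q) W) (β : Matrix (Fin p × Fin q) (Fin 1) ℂ),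
    u = ∑ i, ∑ j, ∑ k, ∑ l, (α 0 (i, k) * β (j, l) 0) • (v i j ⊗ₜ[ℂ] w k l) ∧
    r = matOpNormC α * osV.matNorm v * osW.matNorm w * matOpNormC β}

section StarReps

/-- A `*`-homomorphism of a complex `*`-algebra on some Hilbert space (no contractivity
required). -/
structure StarHomOn (W : Type) [NonUnitalNonAssocSemiring W] [Module ℂ W] [Star W] where
  carrier : Type
  [normedAddCommGroup : NormedAddCommGroup carrier]
  [innerProductSpace : InnerProductSpace ℂ carrier]
  [completeSpace : CompleteSpace carrier]
  hom : W →⋆ₙₐ[ℂ] (carrier →L[ℂ] carrier)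

attribute [instance] StarHomOn.normedAddCommGroup StarHomOn.innerProductSpace
  StarHomOn.completeSpace

/-- A `*`-representation of a Banach `*`-algebra on some Hilbert space: a contractive
`*`-homomorphism into the bounded operators. -/
structure StarRepOn (X : Type) [NonUnitalNonAssocSemiring X] [Module ℂ X] [Star X] [Norm X] where
  carrier : Type
  [normedAddCommGroup : NormedAddCommGroup carrier]
  [innerProductSpace : InnerProductSpace ℂ carrier]
  [completeSpace : CompleteSpace carrier]
  hom : X →⋆ₙₐ[ℂ] (carrier →L[ℂ] carrier)
  contractive : ∀ x, ‖hom x‖ ≤ ‖x‖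

attribute [instance] StarRepOn.normedAddCommGroup StarRepOn.innerProductSpace
  StarRepOn.completeSpace

/-- Topological irreducibility of a `*`-representation: it is nonzero and the only closed
invariant subspaces are `⊥` and `⊤`. -/
def StarRepOn.IsIrreducible {X : Type} [NonUnitalNonAssocSemiring X] [Module ℂ X] [Star X]
    [Norm X] (ρ : StarRepOn X) : Prop :=
  (∃ x, ρ.hom x ≠ 0) ∧
    ∀ U : Submodule ℂ ρ.carrier, IsClosed (U : Set ρ.carrier) →
      (∀ x : X, ∀ v ∈ U, ρ.hom x v ∈ U) → U = ⊥ ∨ U = ⊤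

end StarReps

section BanachStar

variable (X : Type) [NonUnitalNormedRing X] [StarRing X] [NormedSpace ℂ X]

/-- A closed two-sided ideal of `X`. -/
def IsClosedIdeal (I : Submodule ℂ X) : Prop :=
  IsClosed (I : Set X) ∧ (∀ x : X, ∀ y ∈ I, x * y ∈ I) ∧ (∀ x : X, ∀ y ∈ I, y * x ∈ I)

/-- A `*`-ideal: an ideal closed under the involution. -/
def IsStarIdeal (I : Submodule ℂ X) : Prop := ∀ x ∈ I, star x ∈ I

/-- A primitive ideal of `X`: the kernel of an irreducible `*`-representation of `X` on a
Hilbert space. -/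
def IsPrimitiveIdeal (P : Submodule ℂ X) : Prop :=
  ∃ ρ : StarRepOn X, ρ.IsIrreducible ∧ (P : Set X) = {x | ρ.hom x = 0}

/-- The hull of a subset `M` of `X`: all primitive ideals containing `M`. -/
def hullOf (M : Set X) : Set (Submodule ℂ X) := {P | IsPrimitiveIdeal X P ∧ M ⊆ (P : Set X)}

/-- The kernel of a collection of ideals: their intersection. -/
def kernelOf (E : Set (Submodule ℂ X)) : Submodule ℂ X := sInf E

/-- A set of primitive ideals which is closed in the hull-kernel topology:
`E = h(k(E))`. -/
def IsHkClosed (E : Set (Submodule ℂ X)) : Prop :=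
  (∀ P ∈ E, IsPrimitiveIdeal X P) ∧ hullOf X (kernelOf X E : Set X) = E

/-- A (closed) subset `E` of `Prim(X)` is spectral if `k(E)` is the only closed ideal of `X`
whose hull equals `E`. -/
def IsSpectralSet (E : Set (Submodule ℂ X)) : Prop :=
  ∀ J : Submodule ℂ X, IsClosedIdeal X J → hullOf X (J : Set X) = E → J = kernelOf X E

/-- `X` has spectral synthesis if every hull-kernel closed subset of `Prim(X)` is spectral. -/
def HasSpectralSynthesis : Prop :=
  ∀ E : Set (Submodule ℂ X), IsHkClosed X E → IsSpectralSet X E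

/-- The Wiener property: every proper closed two-sided ideal of `X` is annihilated by some
irreducible `*`-representation, i.e. is contained in a primitive ideal. -/
def WienerProperty : Prop :=
  ∀ I : Submodule ℂ X, IsClosedIdeal X I → I ≠ ⊤ → ∃ P, IsPrimitiveIdeal X P ∧ I ≤ P

/-- The topology `τ_w` on the collection of ideals of `X`, generated by the sub-basic open
sets `Z_J = {I : I ⊉ J}` for closed ideals `J`. -/
def tauW : TopologicalSpace (Submodule ℂ X) :=
  .generateFrom {S | ∃ J : Submodule ℂ X, IsClosedIdeal X J ∧ S = {I | ¬ J ≤ I}}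

/-- A (two-sided) bounded approximate identity for an ideal `J` of `X`. -/
def HasBoundedApproxIdentity (J : Submodule ℂ X) : Prop :=
  ∃ (ι : Type) (l : Filter ι) (e : ι → X) (C : ℝ), l.NeBot ∧ (∀ i, e i ∈ J ∧ ‖e i‖ ≤ C) ∧
    ∀ y ∈ J, Filter.Tendsto (fun i => e i * y) l (nhds y) ∧
      Filter.Tendsto (fun i => y * e i) l (nhds y)

/-- A closed prime ideal of `X`: a proper closed ideal `P` such that `I·J ⊆ P` implies
`I ⊆ P` or `J ⊆ P` for closed ideals `I`, `J`. -/
def IsPrimeIdeal (P : Submodule ℂ X) : Prop :=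
  IsClosedIdeal X P ∧ P ≠ ⊤ ∧
    ∀ I J : Submodule ℂ X, IsClosedIdeal X I → IsClosedIdeal X J →
      (∀ x ∈ I, ∀ y ∈ J, x * y ∈ P) → I ≤ P ∨ J ≤ P

/-- The closed ideal generated by products of elements of `J` and `K`. -/
def mulIdeal (J K : Submodule ℂ X) : Submodule ℂ X :=
  (Submodule.span ℂ {z : X | ∃ x ∈ J, ∃ y ∈ K, z = x * y}).topologicalClosure

end BanachStar

section Models

variable (X : Type) [NonUnitalNormedRing X] [StarRing X] [NormedSpace ℂ X]

/-- A realization of a closed `*`-ideal `J` of `X` as a Banach `*`-algebra `Y`: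
an isometric `*`-isomorphism of `Y` onto `J`. -/
structure SubalgebraModel (J : Submodule ℂ X) (Y : Type) [NonUnitalNormedRing Y] [StarRing Y]
    [NormedSpace ℂ Y] where
  incl : Y →⋆ₙₐ[ℂ] X
  isometric : ∀ y, ‖incl y‖ = ‖y‖
  range_eq : Set.range incl = (J : Set X)

/-- A realization of the quotient Banach `*`-algebra `X/J`: a surjective `*`-homomorphism
with kernel `J`, carrying the quotient norm. -/
structure QuotientModel (J : Submodule ℂ X) (Z : Type) [NonUnitalNormedRing Z] [StarRing Z]
    [NormedSpace ℂ Z] where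
  proj : X →⋆ₙₐ[ℂ] Z
  surjective : Function.Surjective proj
  ker_eq : ∀ x, proj x = 0 ↔ x ∈ J
  norm_eq : ∀ x, ‖proj x‖ = Metric.infDist x (J : Set X)

end Models

section CStarTensor

/-- The canonical C*-norm on square matrices over a C*-algebra `A`, described as the
supremum of `‖π v‖` over all `*`-homomorphisms `π` of `M_p(A)` on Hilbert spaces. -/
noncomputable def matCStarNorm {A : Type} [NonUnitalCStarAlgebra A] {p : ℕ}
    (v : Matrix (Fin p) (Fin p) A) : ℝ :=
  sSup {r | ∃ ρ : StarHomOn (Matrix (Fin p) (Fin p) A), r = ‖ρ.hom v‖}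

/-- The operator space projective tensor norm `‖·‖_∧` on the algebraic tensor product
`A ⊗ B` of two C*-algebras. -/
noncomputable def projTensorNorm (A B : Type) [NonUnitalCStarAlgebra A] [NonUnitalCStarAlgebra B]
    (u : A ⊗[ℂ] B) : ℝ :=
  sInf {r | ∃ (p q : ℕ) (α : Matrix (Fin 1) (Fin p × Fin q) ℂ) (v : Matrix (Fin p) (Fin p) A)
    (w : Matrix (Fin q) (Fin q) B) (β : Matrix (Fin p × Fin q) (Fin 1) ℂ),
    u = ∑ i, ∑ j, ∑ k, ∑ l, (α 0 (i, k) * β (j, l) 0) • (v i j ⊗ₜ[ℂ] w k l) ∧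
    r = matOpNormC α * matCStarNorm v * matCStarNorm w * matOpNormC β}

/-- A realization of the operator space projective tensor product `A ⊗̂ B` of two
C*-algebras: a Banach `*`-algebra `X` containing `A ⊗ B` isometrically (for `‖·‖_∧`) and
densely, with multiplication and involution induced by the natural ones. -/
structure OSProjTensorProduct (A B : Type) [NonUnitalCStarAlgebra A] [NonUnitalCStarAlgebra B]
    (X : Type) [NonUnitalNormedRing X] [StarRing X] [NormedSpace ℂ X] [CompleteSpace X] where
  emb : (A ⊗[ℂ] B) →ₗ[ℂ] X
  norm_emb : ∀ u, ‖emb u‖ = projTensorNorm A B u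
  dense_range : DenseRange fun u => emb u
  mul_emb : ∀ (a c : A) (b d : B),
    emb (a ⊗ₜ[ℂ] b) * emb (c ⊗ₜ[ℂ] d) = emb ((a * c) ⊗ₜ[ℂ] (b * d))
  star_emb : ∀ (a : A) (b : B), star (emb (a ⊗ₜ[ℂ] b)) = emb (star a ⊗ₜ[ℂ] star b)

/-- A realization of a C*-tensor norm completion of `A ⊗ B`: a C*-algebra `Y` containing
`A ⊗ B` injectively and densely, with the natural multiplication and involution. -/
structure CStarTensorRealization (A B : Type) [NonUnitalCStarAlgebra A] [NonUnitalCStarAlgebra B]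
    (Y : Type) [NonUnitalCStarAlgebra Y] where
  emb : (A ⊗[ℂ] B) →ₗ[ℂ] Y
  injective : Function.Injective emb
  dense_range : DenseRange fun u => emb u
  mul_emb : ∀ (a c : A) (b d : B),
    emb (a ⊗ₜ[ℂ] b) * emb (c ⊗ₜ[ℂ] d) = emb ((a * c) ⊗ₜ[ℂ] (b * d))
  star_emb : ∀ (a : A) (b : B), star (emb (a ⊗ₜ[ℂ] b)) = emb (star a ⊗ₜ[ℂ] star b)

/-- A realization of the minimal (spatial) C*-tensor product `A ⊗_min B`: a C*-tensor norm
completion of `A ⊗ B` whose norm is minimal among all C*-tensor norms on `A ⊗ B`. -/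
structure MinTensorProduct (A B : Type) [NonUnitalCStarAlgebra A] [NonUnitalCStarAlgebra B]
    (Y : Type) [NonUnitalCStarAlgebra Y] extends CStarTensorRealization A B Y where
  norm_min : ∀ (Z : Type) [NonUnitalCStarAlgebra Z] (r : CStarTensorRealization A B Z)
    (u : A ⊗[ℂ] B), ‖emb u‖ ≤ ‖r.emb u‖

variable {A B : Type} [NonUnitalCStarAlgebra A] [NonUnitalCStarAlgebra B]
variable {X : Type} [NonUnitalNormedRing X] [StarRing X] [NormedSpace ℂ X] [CompleteSpace X]
variable {Y : Type} [NonUnitalCStarAlgebra Y]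

/-- The product ideal `M ⊗̂ N`: the closure in `A ⊗̂ B` of the span of elementary tensors
`a ⊗ b` with `a ∈ M`, `b ∈ N`. -/
noncomputable def prodIdeal (P : OSProjTensorProduct A B X) (M : Submodule ℂ A)
    (N : Submodule ℂ B) : Submodule ℂ X :=
  (Submodule.span ℂ {x : X | ∃ a ∈ M, ∃ b ∈ N, x = P.emb (a ⊗ₜ[ℂ] b)}).topologicalClosure

/-- The closed ideal `Φ(M, N) = A ⊗̂ N + M ⊗̂ B` of `A ⊗̂ B`. -/
noncomputable def PhiIdeal (P : OSProjTensorProduct A B X) (M : Submodule ℂ A)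
    (N : Submodule ℂ B) : Submodule ℂ X :=
  (prodIdeal P ⊤ N ⊔ prodIdeal P M ⊤).topologicalClosure

/-- The lower ideal `J_l` associated with a closed ideal `J` of `A ⊗̂ B`: the closure of the
span of all elementary tensors belonging to `J`. -/
noncomputable def lowerIdeal (P : OSProjTensorProduct A B X) (J : Submodule ℂ X) :
    Submodule ℂ X :=
  (Submodule.span ℂ {x : X | x ∈ J ∧ ∃ (a : A) (b : B), x = P.emb (a ⊗ₜ[ℂ] b)}).topologicalClosure

/-- The upper ideal `J^u = J_min ∩ (A ⊗̂ B)` associated with a closed ideal `J` of `A ⊗̂ B`,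
where `i : A ⊗̂ B → A ⊗_min B` is the canonical inclusion and `J_min` is the closure of
`i(J)` in `A ⊗_min B`. -/
noncomputable def upperIdeal (i : X →L[ℂ] Y) (J : Submodule ℂ X) : Submodule ℂ X :=
  Submodule.comap (i.toLinearMap) ((Submodule.map (i.toLinearMap) J).topologicalClosure)

/-- `i : X → Y` is the canonical `*`-homomorphism `A ⊗̂ B → A ⊗_min B` for the given
realizations: the continuous map which is the identity on the algebraic tensor product. -/
def IsCanonicalInclusion (P : OSProjTensorProduct A B X) (Mn : MinTensorProduct A B Y)
    (i : X →L[ℂ] Y) : Prop :=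
  ∀ u : A ⊗[ℂ] B, i (P.emb u) = Mn.emb u

/-- A closed ideal `J` of `A ⊗̂ B` is spectral if `J_l = J = J^u`. -/
def IsSpectralIdeal (P : OSProjTensorProduct A B X) (i : X →L[ℂ] Y) (J : Submodule ℂ X) :
    Prop :=
  lowerIdeal P J = J ∧ upperIdeal i J = J

/-- The product ideal `M ⊗_min N` inside a realization of `A ⊗_min B`. -/
noncomputable def minProdIdeal (Mn : MinTensorProduct A B Y) (M : Submodule ℂ A)
    (N : Submodule ℂ B) : Submodule ℂ Y :=
  (Submodule.span ℂ {y : Y | ∃ a ∈ M, ∃ b ∈ N, y = Mn.emb (a ⊗ₜ[ℂ] b)}).topologicalClosure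

/-- A realization of the quotient of a C*-algebra `A` by a closed ideal `M`: a surjective
`*`-homomorphism with kernel `M` (for C*-algebras, such a map automatically carries the
quotient norm). -/
structure CStarQuotientModel (A : Type) [NonUnitalCStarAlgebra A] (M : Submodule ℂ A)
    (A' : Type) [NonUnitalCStarAlgebra A'] where
  proj : A →⋆ₙₐ[ℂ] A'
  surjective : Function.Surjective proj
  ker_eq : ∀ a, proj a = 0 ↔ a ∈ M

end CStarTensor

/-- A realization of the Banach `*`-algebra `A ⊗̂_r A`: the operator space projective tensor
product `A ⊗̂ A` equipped with the reverse involution `(a ⊗ b)* = b* ⊗ a*`. -/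
structure OSProjTensorSquareRev (A : Type) [NonUnitalCStarAlgebra A]
    (X : Type) [NonUnitalNormedRing X] [StarRing X] [NormedSpace ℂ X] [CompleteSpace X] where
  emb : (A ⊗[ℂ] A) →ₗ[ℂ] X
  norm_emb : ∀ u, ‖emb u‖ = projTensorNorm A A u
  dense_range : DenseRange fun u => emb u
  mul_emb : ∀ a b c d : A,
    emb (a ⊗ₜ[ℂ] b) * emb (c ⊗ₜ[ℂ] d) = emb ((a * c) ⊗ₜ[ℂ] (b * d))
  star_emb : ∀ a b : A, star (emb (a ⊗ₜ[ℂ] b)) = emb (star b ⊗ₜ[ℂ] star a)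

end

open scoped TensorProduct

/-!
Spectral synthesis says that every closed ideal `I` equals `k(h(I))`; equivalently, closed ideals
with the same hull coincide.

For `X/J`: a closed ideal `K` of `X/J` pulls back to a closed ideal of `X`, and the primitive
ideals of `X` above it contain `J` and so push forward to primitive ideals of `X/J` above `K`;
hence `k(h(K))` pulls back into `k(h(π⁻¹K)) = π⁻¹K`.

For `J`: a primitive ideal `P` of `X` with `J ⊈ P` restricts to a primitive ideal of `J`, and
`J x J ⊆ P` forces `x ∈ P` (the representation of `J` is nondegenerate). So the closed ideal
`[J M J]` of `X` spanned by `J M J` lies in `P` iff `J ⊆ P` or `M ⊆ P`. For a closed ideal `K` of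
`J` this makes `[J K J]` and `[J k(h(K)) J]` closed ideals of `X` with the same hull, whence
`J k(h(K)) J ⊆ K`. The same argument applied to `D = {x ∈ J : J x J ⊆ K}` gives
`D = [J D J] ⊆ K`, and `k(h(K)) ⊆ D`.
-/

theorem Submodule.mapsTo_topologicalClosure_span {R V : Type*} [Semiring R] [TopologicalSpace V]
    [AddCommMonoid V] [Module R V] [ContinuousConstSMul R V] [ContinuousAdd V]
    (f : V →L[R] V) {S : Set V} (hS : Set.MapsTo f S (Submodule.span R S)) :
    Set.MapsTo f (Submodule.span R S).topologicalClosure (Submodule.span R S).topologicalClosure :=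
  have hspan : Set.MapsTo f (Submodule.span R S) (Submodule.span R S) :=
    Submodule.span_le (p := (Submodule.span R S).comap (f : V →ₗ[R] V)) |>.2 hS
  fun _ hv => closure_mono hspan.image_subset
    (image_closure_subset_closure_image f.continuous ⟨_, hv, rfl⟩)

section LiftOfSurjective

variable {R A B C : Type*} [CommSemiring R] [NonUnitalRing A] [Module R A] [Star A]
  [NonUnitalRing B] [Module R B] [Star B] [NonUnitalRing C] [Module R C] [Star C]
  (φ : A →⋆ₙₐ[R] B) (hφ : Function.Surjective φ) (ψ : A →⋆ₙₐ[R] C)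

theorem NonUnitalStarAlgHom.apply_surjInv_apply (hker : ∀ a, φ a = 0 → ψ a = 0) (a : A) :
    ψ (Function.surjInv hφ (φ a)) = ψ a :=
  sub_eq_zero.1 <| by
    rw [← map_sub]
    exact hker _ (by rw [map_sub, Function.surjInv_eq hφ, sub_self])

noncomputable def NonUnitalStarAlgHom.liftOfSurjective (hker : ∀ a, φ a = 0 → ψ a = 0) :
    B →⋆ₙₐ[R] C where
  toFun b := ψ (Function.surjInv hφ b)
  map_smul' c b := by
    obtain ⟨a, rfl⟩ := hφ b
    rw [← map_smul, φ.apply_surjInv_apply hφ ψ hker, φ.apply_surjInv_apply hφ ψ hker,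
      map_smul]
    rfl
  map_zero' := by simpa only [map_zero] using φ.apply_surjInv_apply hφ ψ hker 0
  map_add' b b' := by
    obtain ⟨a, rfl⟩ := hφ b
    obtain ⟨a', rfl⟩ := hφ b'
    simp only [← map_add, φ.apply_surjInv_apply hφ ψ hker]
  map_mul' b b' := by
    obtain ⟨a, rfl⟩ := hφ b
    obtain ⟨a', rfl⟩ := hφ b'
    simp only [← map_mul, φ.apply_surjInv_apply hφ ψ hker]
  map_star' b := by
    obtain ⟨a, rfl⟩ := hφ b
    simp only [← map_star, φ.apply_surjInv_apply hφ ψ hker]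

theorem NonUnitalStarAlgHom.liftOfSurjective_apply (hker : ∀ a, φ a = 0 → ψ a = 0) (a : A) :
    φ.liftOfSurjective hφ ψ hker (φ a) = ψ a :=
  φ.apply_surjInv_apply hφ ψ hker a

end LiftOfSurjective

section Primitive

variable {W : Type} [NonUnitalNormedRing W] [StarRing W] [NormedSpace ℂ W]

theorem StarRepOn.continuous_hom (ρ : StarRepOn W) : Continuous ρ.hom :=
  AddMonoidHomClass.continuous_of_bound ρ.hom 1 fun x => by simpa using ρ.contractive x

theorem StarRepOn.hom_mul_apply (ρ : StarRepOn W) (a b : W) (ξ : ρ.carrier) :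
    ρ.hom (a * b) ξ = ρ.hom a (ρ.hom b ξ) := by
  rw [map_mul]
  rfl

theorem StarRepOn.IsIrreducible.eq_zero_of_forall_apply_eq_zero {σ : StarRepOn W}
    (hσ : σ.IsIrreducible) {I : Submodule ℂ W} (hI : ∀ x, ∀ y ∈ I, y * x ∈ I)
    (hσI : ∃ a ∈ I, σ.hom a ≠ 0) {ξ : σ.carrier} (hξ : ∀ a ∈ I, σ.hom a ξ = 0) : ξ = 0 := by
  let N : Submodule ℂ σ.carrier :=
    ⨅ a : I, LinearMap.ker (σ.hom a : σ.carrier →ₗ[ℂ] σ.carrier)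
  have hN : ∀ η, η ∈ N ↔ ∀ a ∈ I, σ.hom a η = 0 := by simp [N]
  have hNclosed : IsClosed (N : Set σ.carrier) := by
    simp only [N, Submodule.coe_iInf]
    exact isClosed_iInter fun a => (σ.hom a).isClosed_ker
  have hNinv : ∀ x, ∀ η ∈ N, σ.hom x η ∈ N := fun x η hη =>
    (hN _).2 fun a ha => by rw [← σ.hom_mul_apply]; exact (hN η).1 hη _ (hI x a ha)
  rcases hσ.2 N hNclosed hNinv with hbot | htop
  · simpa [hbot] using (hN ξ).2 hξ
  · obtain ⟨a, ha, hσa⟩ := hσI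
    exact absurd (ContinuousLinearMap.ext fun η => (hN η).1 (htop ▸ trivial) a ha) hσa

theorem StarRepOn.IsIrreducible.topologicalClosure_span_eq_top {σ : StarRepOn W}
    (hσ : σ.IsIrreducible) {I : Submodule ℂ W} (hIl : ∀ x, ∀ y ∈ I, x * y ∈ I)
    (hIr : ∀ x, ∀ y ∈ I, y * x ∈ I) (hσI : ∃ a ∈ I, σ.hom a ≠ 0)
    {U : Submodule ℂ σ.carrier} (hU : U ≠ ⊥) :
    (Submodule.span ℂ {v | ∃ a ∈ I, ∃ u ∈ U, v = σ.hom a u}).topologicalClosure = ⊤ := by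
  set S := {v | ∃ a ∈ I, ∃ u ∈ U, v = σ.hom a u}
  have hinv : ∀ x, ∀ v ∈ (Submodule.span ℂ S).topologicalClosure,
      σ.hom x v ∈ (Submodule.span ℂ S).topologicalClosure :=
    fun x => Submodule.mapsTo_topologicalClosure_span (σ.hom x) <| by
      rintro _ ⟨a, ha, u, hu, rfl⟩
      exact Submodule.subset_span ⟨x * a, hIl x a ha, u, hu, (σ.hom_mul_apply x a u).symm⟩
  refine (hσ.2 _ (Submodule.isClosed_topologicalClosure _) hinv).resolve_left fun hbot => ?_
  obtain ⟨u, hu, hu0⟩ := (Submodule.ne_bot_iff U).1 hU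
  refine hu0 (hσ.eq_zero_of_forall_apply_eq_zero hIr hσI fun a ha => ?_)
  have hmem : σ.hom a u ∈ (Submodule.span ℂ S).topologicalClosure :=
    Submodule.le_topologicalClosure _ (Submodule.subset_span ⟨a, ha, u, hu, rfl⟩)
  rwa [hbot, Submodule.mem_bot] at hmem

theorem IsPrimitiveIdeal.exists_isIrreducible_mem_iff {P : Submodule ℂ W}
    (hP : IsPrimitiveIdeal W P) :
    ∃ σ : StarRepOn W, σ.IsIrreducible ∧ ∀ x, x ∈ P ↔ σ.hom x = 0 :=
  let ⟨σ, hσ, hPσ⟩ := hP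
  ⟨σ, hσ, fun x => Set.ext_iff.1 hPσ x⟩

theorem IsPrimitiveIdeal.isClosedIdeal {P : Submodule ℂ W} (hP : IsPrimitiveIdeal W P) :
    IsClosedIdeal W P := by
  obtain ⟨σ, -, hPσ⟩ := hP
  refine ⟨hPσ ▸ isClosed_eq σ.continuous_hom continuous_const, fun x y hy => ?_, fun x y hy => ?_⟩
  all_goals
    rw [← SetLike.mem_coe, hPσ] at hy ⊢
    simp [show σ.hom y = 0 from hy]

theorem IsPrimitiveIdeal.mem_of_forall_mul_mul_mem {P J : Submodule ℂ W}
    (hP : IsPrimitiveIdeal W P) (hJl : ∀ x, ∀ y ∈ J, x * y ∈ J) (hJr : ∀ x, ∀ y ∈ J, y * x ∈ J)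
    (hJP : ¬ J ≤ P) {x : W} (hx : ∀ a ∈ J, ∀ b ∈ J, a * x * b ∈ P) : x ∈ P := by
  obtain ⟨σ, hσ, hPσ⟩ := hP.exists_isIrreducible_mem_iff
  have hσJ : ∃ a ∈ J, σ.hom a ≠ 0 := by
    obtain ⟨a, ha, haP⟩ := SetLike.not_le_iff_exists.1 hJP
    exact ⟨a, ha, fun h => haP ((hPσ a).2 h)⟩
  have hrange : ∀ b ∈ J, ∀ ξ, σ.hom x (σ.hom b ξ) = 0 := fun b hb ξ =>
    hσ.eq_zero_of_forall_apply_eq_zero hJr hσJ fun a ha => by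
      rw [← σ.hom_mul_apply, ← σ.hom_mul_apply, (hPσ _).1 (hx a ha b hb)]
      rfl
  have hdense := hσ.topologicalClosure_span_eq_top hJl hJr hσJ (U := ⊤) <| by
    obtain ⟨a, -, ha⟩ := hσJ
    obtain ⟨ξ, hξ⟩ := DFunLike.ne_iff.1 ha
    exact (Submodule.ne_bot_iff ⊤).2 ⟨ξ, trivial, fun h => hξ (by simp [h])⟩
  have hker : ⊤ ≤ LinearMap.ker (σ.hom x : σ.carrier →ₗ[ℂ] σ.carrier) := by
    rw [← hdense]
    refine Submodule.topologicalClosure_minimal _ (Submodule.span_le.2 ?_) (σ.hom x).isClosed_ker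
    rintro _ ⟨b, hb, ξ, -, rfl⟩
    exact hrange b hb ξ
  exact (hPσ x).2 (ContinuousLinearMap.ext fun ξ => hker trivial)

end Primitive

section Sandwich

variable {W : Type} [NonUnitalNormedRing W] [NormedSpace ℂ W]

def sandwichSpan (J : Submodule ℂ W) (M : Set W) : Submodule ℂ W :=
  (Submodule.span ℂ {z | ∃ a ∈ J, ∃ x ∈ M, ∃ b ∈ J, z = a * x * b}).topologicalClosure

theorem mul_mul_mem_sandwichSpan {J : Submodule ℂ W} {M : Set W} {a x b : W} (ha : a ∈ J)
    (hx : x ∈ M) (hb : b ∈ J) : a * x * b ∈ sandwichSpan J M :=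
  Submodule.le_topologicalClosure _ (Submodule.subset_span ⟨a, ha, x, hx, b, hb, rfl⟩)

theorem sandwichSpan_le {J N : Submodule ℂ W} {M : Set W} (hN : IsClosed (N : Set W))
    (h : ∀ a ∈ J, ∀ x ∈ M, ∀ b ∈ J, a * x * b ∈ N) : sandwichSpan J M ≤ N := by
  refine Submodule.topologicalClosure_minimal _ (Submodule.span_le.2 ?_) hN
  rintro _ ⟨a, ha, x, hx, b, hb, rfl⟩
  exact h a ha x hx b hb

variable [IsScalarTower ℂ W W] [SMulCommClass ℂ W W]

noncomputable def sandwichIdeal (J M : Submodule ℂ W) : Submodule ℂ W :=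
  J ⊓ ⨅ (a ∈ J) (b ∈ J),
    M.comap (LinearMap.mulRight ℂ b ∘ₗ LinearMap.mulLeft ℂ a)

theorem mem_sandwichIdeal {J M : Submodule ℂ W} {x : W} :
    x ∈ sandwichIdeal J M ↔ x ∈ J ∧ ∀ a ∈ J, ∀ b ∈ J, a * x * b ∈ M := by
  simp [sandwichIdeal]

theorem isClosedIdeal_sandwichSpan {J : Submodule ℂ W} (hJl : ∀ x, ∀ y ∈ J, x * y ∈ J)
    (hJr : ∀ x, ∀ y ∈ J, y * x ∈ J) (M : Set W) : IsClosedIdeal W (sandwichSpan J M) := by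
  refine ⟨Submodule.isClosed_topologicalClosure _, fun x y hy => ?_, fun x y hy => ?_⟩
  · refine Submodule.mapsTo_topologicalClosure_span (ContinuousLinearMap.mul ℂ W x) ?_ hy
    rintro _ ⟨a, ha, z, hz, b, hb, rfl⟩
    exact Submodule.subset_span ⟨x * a, hJl x a ha, z, hz, b, hb, by simp [mul_assoc]⟩
  · refine Submodule.mapsTo_topologicalClosure_span ((ContinuousLinearMap.mul ℂ W).flip x) ?_ hy
    rintro _ ⟨a, ha, z, hz, b, hb, rfl⟩
    exact Submodule.subset_span ⟨a, ha, z, hz, b * x, hJr x b hb, by simp [mul_assoc]⟩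

theorem isClosedIdeal_sandwichIdeal {J M : Submodule ℂ W} (hJ : IsClosedIdeal W J)
    (hM : IsClosed (M : Set W)) : IsClosedIdeal W (sandwichIdeal J M) := by
  refine ⟨?_, fun x y hy => ?_, fun x y hy => ?_⟩
  · have hcoe : (sandwichIdeal J M : Set W) =
        (J : Set W) ∩ ⋂ a ∈ J, ⋂ b ∈ J, (fun x => a * x * b) ⁻¹' (M : Set W) := by
      ext x
      simp [mem_sandwichIdeal]
    rw [hcoe]
    exact hJ.1.inter <| isClosed_biInter fun a _ => isClosed_biInter fun b _ =>
      hM.preimage ((continuous_const.mul continuous_id).mul continuous_const)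
  · obtain ⟨hyJ, hy⟩ := mem_sandwichIdeal.1 hy
    refine mem_sandwichIdeal.2 ⟨hJ.2.1 x y hyJ, fun a ha b hb => ?_⟩
    simpa only [mul_assoc] using hy (a * x) (hJ.2.2 x a ha) b hb
  · obtain ⟨hyJ, hy⟩ := mem_sandwichIdeal.1 hy
    refine mem_sandwichIdeal.2 ⟨hJ.2.2 x y hyJ, fun a ha b hb => ?_⟩
    simpa only [mul_assoc] using hy a ha (x * b) (hJ.2.1 x b hb)

end Sandwich

section Synthesis

variable {W : Type} [NonUnitalNormedRing W] [StarRing W] [NormedSpace ℂ W]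

theorem le_kernelOf_hullOf (I : Submodule ℂ W) : I ≤ kernelOf W (hullOf W I) :=
  fun _ hx => Submodule.mem_sInf.2 fun _ hP => hP.2 hx

theorem kernelOf_hullOf_le_iff {I Q : Submodule ℂ W} (hQ : IsPrimitiveIdeal W Q) :
    kernelOf W (hullOf W I) ≤ Q ↔ I ≤ Q :=
  ⟨(le_kernelOf_hullOf I).trans, fun h => sInf_le ⟨hQ, h⟩⟩

theorem isHkClosed_hullOf (M : Set W) : IsHkClosed W (hullOf W M) := by
  refine ⟨fun _ hP => hP.1, Set.Subset.antisymm ?_ ?_⟩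
  · rintro P ⟨hP, hsub⟩
    exact ⟨hP, fun x hx => hsub (Submodule.mem_sInf.2 fun _ hQ => hQ.2 hx)⟩
  · rintro P ⟨hP, hsub⟩
    exact ⟨hP, fun x hx => Submodule.mem_sInf.1 hx P ⟨hP, hsub⟩⟩

theorem hasSpectralSynthesis_iff_kernelOf_hullOf_le :
    HasSpectralSynthesis W ↔ ∀ I, IsClosedIdeal W I → kernelOf W (hullOf W I) ≤ I := by
  refine ⟨fun h I hI => (h _ (isHkClosed_hullOf _) I hI rfl).ge, ?_⟩
  rintro h E - K hK rfl
  exact le_antisymm (le_kernelOf_hullOf K) (h K hK)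

theorem HasSpectralSynthesis.eq_of_forall_le_iff (h : HasSpectralSynthesis W)
    {I I' : Submodule ℂ W} (hI : IsClosedIdeal W I) (hI' : IsClosedIdeal W I')
    (hII' : ∀ P, IsPrimitiveIdeal W P → (I ≤ P ↔ I' ≤ P)) : I = I' := by
  have hhull : hullOf W I = hullOf W I' := Set.ext fun P => and_congr_right fun hP => hII' P hP
  exact (h _ (isHkClosed_hullOf _) I hI hhull).trans (h _ (isHkClosed_hullOf _) I' hI' rfl).symm

theorem IsPrimitiveIdeal.sandwichSpan_le_iff {P J : Submodule ℂ W} {M : Set W}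
    (hP : IsPrimitiveIdeal W P) (hJl : ∀ x, ∀ y ∈ J, x * y ∈ J)
    (hJr : ∀ x, ∀ y ∈ J, y * x ∈ J) : sandwichSpan J M ≤ P ↔ J ≤ P ∨ M ⊆ P := by
  obtain ⟨hPc, hPl, hPr⟩ := hP.isClosedIdeal
  refine ⟨fun h => or_iff_not_imp_left.2 fun hJP x hx => ?_, fun h => sandwichSpan_le hPc ?_⟩
  · exact hP.mem_of_forall_mul_mul_mem hJl hJr hJP fun a ha b hb =>
      h (mul_mul_mem_sandwichSpan ha hx hb)
  · rintro a ha x hx b hb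
    rcases h with hJP | hMP
    · exact hPr b _ (hPr x a (hJP ha))
    · exact hPr b _ (hPl a x (hMP hx))

variable [IsScalarTower ℂ W W] [SMulCommClass ℂ W W]

theorem HasSpectralSynthesis.sandwichIdeal_le (h : HasSpectralSynthesis W)
    {J M : Submodule ℂ W} (hJ : IsClosedIdeal W J) (hM : IsClosed (M : Set W)) :
    sandwichIdeal J M ≤ M := by
  have hDJ : sandwichIdeal J M ≤ J := fun x hx => (mem_sandwichIdeal.1 hx).1
  calc sandwichIdeal J M = sandwichSpan J (sandwichIdeal J M) :=
        h.eq_of_forall_le_iff (isClosedIdeal_sandwichIdeal hJ hM)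
          (isClosedIdeal_sandwichSpan hJ.2.1 hJ.2.2 _) fun P hP => by
            rw [hP.sandwichSpan_le_iff hJ.2.1 hJ.2.2]
            exact ⟨Or.inr, fun hP' => hP'.elim hDJ.trans id⟩
    _ ≤ M := sandwichSpan_le hM fun a ha _ hx b hb => (mem_sandwichIdeal.1 hx).2 a ha b hb

end Synthesis

namespace QuotientModel

variable {X : Type} [NonUnitalNormedRing X] [StarRing X] [NormedSpace ℂ X] {J : Submodule ℂ X}
  {Z : Type} [NonUnitalNormedRing Z] [StarRing Z] [NormedSpace ℂ Z]

theorem norm_proj_le (mZ : QuotientModel X J Z) (x : X) : ‖mZ.proj x‖ ≤ ‖x‖ := by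
  simpa [mZ.norm_eq] using Metric.infDist_le_dist_of_mem (x := x) J.zero_mem

theorem continuous_proj (mZ : QuotientModel X J Z) : Continuous mZ.proj :=
  AddMonoidHomClass.continuous_of_bound _ 1 fun x => by simpa using mZ.norm_proj_le x

theorem comap_map_eq (mZ : QuotientModel X J Z) {P : Submodule ℂ X} (hJP : J ≤ P) :
    (P.map (mZ.proj : X →ₗ[ℂ] Z)).comap (mZ.proj : X →ₗ[ℂ] Z) = P := by
  have hker : LinearMap.ker (mZ.proj : X →ₗ[ℂ] Z) = J := Submodule.ext mZ.ker_eq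
  rw [Submodule.comap_map_eq, hker, sup_eq_left.2 hJP]

theorem isPrimitiveIdeal_map (mZ : QuotientModel X J Z) {P : Submodule ℂ X}
    (hP : IsPrimitiveIdeal X P) (hJP : J ≤ P) :
    IsPrimitiveIdeal Z (P.map (mZ.proj : X →ₗ[ℂ] Z)) := by
  obtain ⟨σ, hσ, hPσ⟩ := hP.exists_isIrreducible_mem_iff
  have hker : ∀ x, mZ.proj x = 0 → σ.hom x = 0 := fun x hx =>
    (hPσ x).1 (hJP ((mZ.ker_eq x).1 hx))
  set ρ := mZ.proj.liftOfSurjective mZ.surjective σ.hom hker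
  have hρ : ∀ x, ρ (mZ.proj x) = σ.hom x :=
    mZ.proj.liftOfSurjective_apply mZ.surjective σ.hom hker
  have hcontr : ∀ z, ‖ρ z‖ ≤ ‖z‖ := by
    intro z
    obtain ⟨x, rfl⟩ := mZ.surjective z
    rw [hρ, mZ.norm_eq]
    refine (Metric.le_infDist ⟨0, J.zero_mem⟩).2 fun j hj => ?_
    calc ‖σ.hom x‖ = ‖σ.hom (x - j)‖ := by rw [map_sub, hker j ((mZ.ker_eq j).2 hj), sub_zero]
      _ ≤ dist x j := (σ.contractive _).trans_eq (dist_eq_norm x j).symm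
  refine ⟨{ carrier := σ.carrier, hom := ρ, contractive := hcontr }, ⟨?_, ?_⟩, ?_⟩
  · obtain ⟨x, hx⟩ := hσ.1
    exact ⟨mZ.proj x, (hρ x).symm ▸ hx⟩
  · refine fun U hU hinv => hσ.2 U hU fun x v hv => ?_
    simpa only [hρ] using hinv (mZ.proj x) v hv
  · ext z
    obtain ⟨x, rfl⟩ := mZ.surjective z
    change (mZ.proj : X →ₗ[ℂ] Z) x ∈ P.map (mZ.proj : X →ₗ[ℂ] Z) ↔ ρ (mZ.proj x) = 0
    rw [← Submodule.mem_comap, mZ.comap_map_eq hJP, hPσ, hρ]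

theorem hasSpectralSynthesis (mZ : QuotientModel X J Z) (hss : HasSpectralSynthesis X) :
    HasSpectralSynthesis Z := by
  refine hasSpectralSynthesis_iff_kernelOf_hullOf_le.2 fun K hK z hz => ?_
  obtain ⟨x, rfl⟩ := mZ.surjective z
  set π := (mZ.proj : X →ₗ[ℂ] Z)
  have hK' : IsClosedIdeal X (K.comap π) :=
    ⟨hK.1.preimage mZ.continuous_proj, fun x y hy => by simpa [π] using hK.2.1 _ _ hy,
      fun x y hy => by simpa [π] using hK.2.2 _ _ hy⟩
  refine hasSpectralSynthesis_iff_kernelOf_hullOf_le.1 hss _ hK' (Submodule.mem_sInf.2 ?_)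
  rintro P ⟨hP, hKP⟩
  have hJP : J ≤ P := fun j hj =>
    hKP (show π j ∈ K from ((mZ.ker_eq j).2 hj).symm ▸ K.zero_mem)
  have hKP' : K ≤ P.map π :=
    (Submodule.map_comap_eq_of_surjective mZ.surjective K).ge.trans (Submodule.map_mono hKP)
  rw [← mZ.comap_map_eq hJP]
  exact Submodule.mem_sInf.1 hz _ ⟨mZ.isPrimitiveIdeal_map hP hJP, hKP'⟩

end QuotientModel

namespace SubalgebraModel

variable {X : Type} [NonUnitalNormedRing X] [StarRing X] [NormedSpace ℂ X] {J : Submodule ℂ X}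
  {Y : Type} [NonUnitalNormedRing Y] [StarRing Y] [NormedSpace ℂ Y]

theorem incl_mem (mY : SubalgebraModel X J Y) (y : Y) : mY.incl y ∈ J := by
  rw [← SetLike.mem_coe, ← mY.range_eq]
  exact Set.mem_range_self y

theorem exists_incl_eq (mY : SubalgebraModel X J Y) {x : X} (hx : x ∈ J) : ∃ y, mY.incl y = x :=
  (mY.range_eq ▸ hx : x ∈ Set.range mY.incl)

theorem isometry_incl (mY : SubalgebraModel X J Y) : Isometry mY.incl :=
  AddMonoidHomClass.isometry_of_norm _ mY.isometric

theorem isClosed_map (mY : SubalgebraModel X J Y) (hJ : IsClosed (J : Set X))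
    {K : Submodule ℂ Y} (hK : IsClosed (K : Set Y)) :
    IsClosed (K.map (mY.incl : Y →ₗ[ℂ] X) : Set X) := by
  rw [Submodule.map_coe]
  exact (Topology.IsClosedEmbedding.mk mY.isometry_incl.isEmbedding
    (mY.range_eq ▸ hJ)).isClosedMap _ hK

theorem isPrimitiveIdeal_comap (mY : SubalgebraModel X J Y) (hJl : ∀ x, ∀ y ∈ J, x * y ∈ J)
    (hJr : ∀ x, ∀ y ∈ J, y * x ∈ J) {P : Submodule ℂ X} (hP : IsPrimitiveIdeal X P)
    (hJP : ¬ J ≤ P) : IsPrimitiveIdeal Y (P.comap (mY.incl : Y →ₗ[ℂ] X)) := by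
  obtain ⟨σ, hσ, hPσ⟩ := hP.exists_isIrreducible_mem_iff
  obtain ⟨a, ha, haP⟩ := SetLike.not_le_iff_exists.1 hJP
  have hσJ : ∃ a ∈ J, σ.hom a ≠ 0 := ⟨a, ha, fun h => haP ((hPσ a).2 h)⟩
  refine ⟨{ carrier := σ.carrier
            hom := σ.hom.comp mY.incl
            contractive := fun y => (σ.contractive _).trans_eq (mY.isometric y) },
    ⟨?_, fun U hU hinv => ?_⟩, ?_⟩
  · obtain ⟨y, rfl⟩ := mY.exists_incl_eq ha
    exact ⟨y, fun h => haP ((hPσ _).2 h)⟩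
  · refine or_iff_not_imp_left.2 fun hU0 => eq_top_iff.2 ?_
    rw [← hσ.topologicalClosure_span_eq_top hJl hJr hσJ hU0]
    refine Submodule.topologicalClosure_minimal _ (Submodule.span_le.2 ?_) hU
    rintro _ ⟨b, hb, u, hu, rfl⟩
    obtain ⟨y, rfl⟩ := mY.exists_incl_eq hb
    exact hinv y u hu
  · ext y
    exact hPσ (mY.incl y)

theorem sandwichSpan_map_le (mY : SubalgebraModel X J Y) (hJ : IsClosed (J : Set X))
    {K : Submodule ℂ Y} (hK : IsClosedIdeal Y K) :
    sandwichSpan J (K.map (mY.incl : Y →ₗ[ℂ] X)) ≤ K.map (mY.incl : Y →ₗ[ℂ] X) := by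
  refine sandwichSpan_le (mY.isClosed_map hJ hK.1) fun a ha _ ⟨y, hy, hyx⟩ b hb => ?_
  obtain ⟨u, rfl⟩ := mY.exists_incl_eq ha
  obtain ⟨v, rfl⟩ := mY.exists_incl_eq hb
  refine ⟨u * y * v, hK.2.2 v _ (hK.2.1 u y hy), ?_⟩
  simp [← hyx]

theorem sandwichSpan_map_le_iff (mY : SubalgebraModel X J Y) (hJl : ∀ x, ∀ y ∈ J, x * y ∈ J)
    (hJr : ∀ x, ∀ y ∈ J, y * x ∈ J) {K : Submodule ℂ Y} {P : Submodule ℂ X}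
    (hP : IsPrimitiveIdeal X P) :
    sandwichSpan J (K.map (mY.incl : Y →ₗ[ℂ] X)) ≤ P ↔
      J ≤ P ∨ K ≤ P.comap (mY.incl : Y →ₗ[ℂ] X) := by
  rw [hP.sandwichSpan_le_iff hJl hJr, SetLike.coe_subset_coe, Submodule.map_le_iff_le_comap]

theorem hasSpectralSynthesis [IsScalarTower ℂ X X] [SMulCommClass ℂ X X]
    (mY : SubalgebraModel X J Y) (hJ : IsClosedIdeal X J) (hss : HasSpectralSynthesis X) :
    HasSpectralSynthesis Y := by
  refine hasSpectralSynthesis_iff_kernelOf_hullOf_le.2 fun K hK y hy => ?_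
  set ι := (mY.incl : Y →ₗ[ℂ] X)
  have hsandwich : sandwichSpan J ((kernelOf Y (hullOf Y K)).map ι) = sandwichSpan J (K.map ι) :=
    hss.eq_of_forall_le_iff (isClosedIdeal_sandwichSpan hJ.2.1 hJ.2.2 _)
      (isClosedIdeal_sandwichSpan hJ.2.1 hJ.2.2 _) fun P hP => by
        rw [mY.sandwichSpan_map_le_iff hJ.2.1 hJ.2.2 hP,
          mY.sandwichSpan_map_le_iff hJ.2.1 hJ.2.2 hP]
        by_cases hJP : J ≤ P
        · exact iff_of_true (Or.inl hJP) (Or.inl hJP)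
        · rw [kernelOf_hullOf_le_iff (mY.isPrimitiveIdeal_comap hJ.2.1 hJ.2.2 hP hJP)]
  have hιy : ι y ∈ sandwichIdeal J (K.map ι) :=
    mem_sandwichIdeal.2 ⟨mY.incl_mem y, fun a ha b hb => mY.sandwichSpan_map_le hJ.1 hK
      (hsandwich ▸ mul_mul_mem_sandwichSpan ha ⟨y, hy, rfl⟩ hb)⟩
  obtain ⟨y', hy', hyy'⟩ := hss.sandwichIdeal_le hJ (mY.isClosed_map hJ.1 hK.1) hιy
  exact mY.isometry_incl.injective hyy' ▸ hy'

end SubalgebraModel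

theorem spectralSynthesis_ideal_and_quotient_of_spectralSynthesis_general
    (X : Type) [NonUnitalNormedRing X] [StarRing X] [NormedSpace ℂ X]
    [IsScalarTower ℂ X X] [SMulCommClass ℂ X X]
    (J : Submodule ℂ X) (hJ : IsClosedIdeal X J)
    (Y : Type) [NonUnitalNormedRing Y] [StarRing Y] [NormedSpace ℂ Y]
    (mY : SubalgebraModel X J Y)
    (Z : Type) [NonUnitalNormedRing Z] [StarRing Z] [NormedSpace ℂ Z]
    (mZ : QuotientModel X J Z)
    (hss : HasSpectralSynthesis X) :
    HasSpectralSynthesis Y ∧ HasSpectralSynthesis Z :=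
  ⟨mY.hasSpectralSynthesis hJ hss, mZ.hasSpectralSynthesis hss⟩

theorem spectralSynthesis_ideal_and_quotient_of_spectralSynthesis
    (X : Type) [NonUnitalNormedRing X] [StarRing X] [NormedSpace ℂ X] [CompleteSpace X]
    [IsScalarTower ℂ X X] [SMulCommClass ℂ X X] [StarModule ℂ X] [NormedStarGroup X]
    (hWX : WienerProperty X)
    (J : Submodule ℂ X) (hJ : IsClosedIdeal X J) (hJstar : IsStarIdeal X J)
    (Y : Type) [NonUnitalNormedRing Y] [StarRing Y] [NormedSpace ℂ Y] [CompleteSpace Y]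
    [IsScalarTower ℂ Y Y] [SMulCommClass ℂ Y Y] [StarModule ℂ Y] [NormedStarGroup Y]
    (mY : SubalgebraModel X J Y) (hWY : WienerProperty Y)
    (Z : Type) [NonUnitalNormedRing Z] [StarRing Z] [NormedSpace ℂ Z] [CompleteSpace Z]
    [IsScalarTower ℂ Z Z] [SMulCommClass ℂ Z Z] [StarModule ℂ Z] [NormedStarGroup Z]
    (mZ : QuotientModel X J Z)
    (hss : HasSpectralSynthesis X) :
    HasSpectralSynthesis Y ∧ HasSpectralSynthesis Z :=
  spectralSynthesis_ideal_and_quotient_of_spectralSynthesis_general X J hJ Y mY Z mZ hss
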